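/- arXiv:2301.12267 — 3 statements merged into one kernel-verified Lean document; each statement's English description precedes it below -/
import Mathlib

section
/- Let B̄ = B/A (the cokernel of the structure map A → B, viewed as an A-module). There is an isomorphism of right B-modules J ≅ B̄ ⊗_A B, provided B is free as an A-module with a basis containing 1. -/
open TensorProduct

/-- If `B` is free as an `A`-module on a basis containing `1`, then with
`B̄ = B/(A·1)` there is an isomorphism of right `B`-modules `J ≅ B̄ ⊗[A] B`, i.e. an
`A`-linear isomorphism intertwining the right `B`-action on `J` (multiplication by
`1 ⊗ b`) with the right `B`-action on the last tensor factor of `B̄ ⊗[A] B`. -/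
theorem stmt3 (A B : Type*) [CommRing A] [CommRing B] [Algebra A B]
    (ι : Type*) (v : Module.Basis ι A B) (i₀ : ι) (h1 : v i₀ = 1) :
    let J : Ideal (B ⊗[A] B) :=
      RingHom.ker (Algebra.TensorProduct.lmul' A (S := B)).toRingHom
    let Bbar := B ⧸ (Submodule.span A {(1 : B)})
    ∃ e : J ≃ₗ[A] (Bbar ⊗[A] B),
      ∀ (x : J) (b : B),
        e ((((1 : B) ⊗ₜ[A] b : B ⊗[A] B)) • x)
          = LinearMap.lTensor Bbar (LinearMap.mulRight A b) (e x) := by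
  intro J Bbar
  clear h1
  set p : Submodule A B := Submodule.span A {(1 : B)} with hp
  have hmk1 : (p.mkQ) (1 : B) = 0 := by
    rw [Submodule.mkQ_apply, Submodule.Quotient.mk_eq_zero]
    exact Submodule.mem_span_singleton_self 1
  -- f0 : B ⊗ B → Bbar ⊗ B
  set f0 : (B ⊗[A] B) →ₗ[A] Bbar ⊗[A] B := LinearMap.rTensor B p.mkQ with hf0
  -- bilinear map h
  set h : B →ₗ[A] B →ₗ[A] B ⊗[A] B :=
    LinearMap.mk₂ A (fun b c => b ⊗ₜ[A] c - 1 ⊗ₜ[A] (b*c))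
      (by intro m m' n; simp [add_tmul, add_mul, tmul_add]; ring)
      (by intro c m n; simp [smul_tmul', smul_sub, tmul_smul, mul_smul_comm, smul_mul_assoc])
      (by intro m n n'; simp [tmul_add, mul_add]; ring)
      (by intro c m n; simp [tmul_smul, smul_sub, mul_smul_comm]) with hh
  have hspan : p ≤ LinearMap.ker h := by
    rw [hp, Submodule.span_le]
    rintro x rfl
    simp only [SetLike.mem_coe, LinearMap.mem_ker]
    ext c
    simp [hh]
  set H : Bbar →ₗ[A] (B →ₗ[A] B ⊗[A] B) := Submodule.liftQ p h hspan with hH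
  set g0 : (Bbar ⊗[A] B) →ₗ[A] B ⊗[A] B := TensorProduct.lift H with hg0
  have hg0tmul : ∀ (b c : B), g0 ((p.mkQ b) ⊗ₜ[A] c) = b ⊗ₜ[A] c - 1 ⊗ₜ[A] (b*c) := by
    intro b c
    show (H (p.mkQ b)) c = _
    rw [hH, Submodule.mkQ_apply, Submodule.liftQ_apply, hh, LinearMap.mk₂_apply]
  set μ := Algebra.TensorProduct.lmul' A (S := B) with hμ
  -- key identity
  have key : ∀ x : B ⊗[A] B, g0 (f0 x) = x - 1 ⊗ₜ[A] (μ x) := by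
    intro x
    induction x using TensorProduct.induction_on with
    | zero => simp
    | tmul b c => simp [hf0, hg0tmul, hμ]
    | add x y hx hy =>
        simp only [map_add, hx, hy, tmul_add]
        abel
  have hginJ : ∀ y : Bbar ⊗[A] B, g0 y ∈ J := by
    intro y
    induction y using TensorProduct.induction_on with
    | zero => simp [Submodule.zero_mem]
    | tmul b c =>
        obtain ⟨b, rfl⟩ := p.mkQ_surjective b
        show _ ∈ RingHom.ker _
        rw [RingHom.mem_ker, hg0tmul]
        simp
    | add x y hx hy => rw [map_add]; exact Ideal.add_mem _ hx hy
  set f : J →ₗ[A] Bbar ⊗[A] B := f0 ∘ₗ (J.restrictScalars A).subtype with hf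
  set g : (Bbar ⊗[A] B) →ₗ[A] J :=
    LinearMap.codRestrict (J.restrictScalars A) g0 hginJ with hg
  have hfg : ∀ y, f (g y) = y := by
    intro y
    induction y using TensorProduct.induction_on with
    | zero => simp
    | tmul b c =>
        obtain ⟨b, rfl⟩ := p.mkQ_surjective b
        show f0 (g0 ((p.mkQ b) ⊗ₜ[A] c)) = (p.mkQ b) ⊗ₜ[A] c
        rw [hg0tmul]
        simp only [hf0, map_sub, LinearMap.rTensor_tmul, hmk1, TensorProduct.zero_tmul,
          sub_zero, Submodule.mkQ_apply]
        rfl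
    | add x y hx hy => rw [map_add, map_add, hx, hy]
  have hgf : ∀ x : J, g (f x) = x := by
    intro x
    have hx : μ (x : B ⊗[A] B) = 0 := x.2
    apply Subtype.ext
    show g0 (f0 (x : B ⊗[A] B)) = (x : B ⊗[A] B)
    rw [key, hx, tmul_zero, sub_zero]
  refine ⟨LinearEquiv.ofLinear f g (LinearMap.ext hfg) (LinearMap.ext hgf), ?_⟩
  intro x b
  show f ((((1 : B) ⊗ₜ[A] b : B ⊗[A] B)) • x) = LinearMap.lTensor Bbar (LinearMap.mulRight A b) (f x)
  have hthis : ∀ z : B ⊗[A] B, f0 (((1:B) ⊗ₜ[A] b) * z)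
      = LinearMap.lTensor Bbar (LinearMap.mulRight A b) (f0 z) := by
    intro z
    induction z using TensorProduct.induction_on with
    | zero => simp
    | tmul a c => simp [hf0, Algebra.TensorProduct.tmul_mul_tmul, mul_comm b c]
    | add x y hx hy => simp only [mul_add, map_add, hx, hy]
  have h2 : f ((((1 : B) ⊗ₜ[A] b : B ⊗[A] B)) • x) = f0 (((1:B) ⊗ₜ[A] b) * (x : B ⊗[A] B)) := rfl
  have h3 : f x = f0 (x : B ⊗[A] B) := rfl
  rw [h2, h3, hthis]
end

section
/- Let N be a B-module that is free as a B-module. Then the following are equivalent: (i) the multiplication map π_N : N ⊗_A B → N, x ⊗ b ↦ xb, is a split epimorphism of B-modules; (ii) for every n ≥ 1, the short exact sequence 0 → N ⊗_B {}^nJ → N ⊗_A B^{⊗(n−1)} ⊗_A B → N ⊗_B {}^{n−1}J → 0 of B-modules splits, where {}^nJ denotes the kernel of the (n−2)-nd bar differential (with {}^0J = B and {}^1J = J the diagonal ideal). -/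
open TensorProduct
open scoped Classical

/-- The pure tensor `b₁ ⊗ ⋯ ⊗ b_n ∈ B^{⊗_A n}`, realized in the tensor algebra
`T(B) = ⨁ₙ B^{⊗_A n}` of the `A`-module `B` as the product `ι b₁ ⋯ ι b_n`. -/
noncomputable def pt (A : Type*) [CommRing A] {B : Type*} [CommRing B] [Algebra A B]
    (l : List B) : TensorAlgebra A B :=
  (l.map (TensorAlgebra.ι A)).prod

/-- Merging entries `i` and `i+1` of a list by multiplication. -/
def mergeAt {B : Type*} [Mul B] [One B] (l : List B) (i : ℕ) : List B :=
  l.take i ++ (l.getD i 1 * l.getD (i + 1) 1) :: l.drop (i + 2)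

/-- The right `B`-action on pure tensors: multiply the last entry by `b`. -/
def rmulList {B : Type*} [Mul B] [One B] (l : List B) (b : B) : List B :=
  l.dropLast ++ [(l.getLast?.getD 1) * b]

section ListLemmas
variable {B : Type*} [Monoid B]

lemma mergeAt_zero (a b : B) (t : List B) : mergeAt (a::b::t) 0 = (a*b)::t := by
  simp [mergeAt]

lemma mergeAt_succ (a : B) (t : List B) (k : ℕ) : mergeAt (a::t) (k+1) = a :: mergeAt t k := by
  simp [mergeAt, List.getD_cons_succ, List.drop_succ_cons]

lemma mergeAt_length (l : List B) (i : ℕ) (h : i+2 ≤ l.length) :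
    (mergeAt l i).length = l.length - 1 := by
  simp [mergeAt]
  omega

lemma mergeAt_ne_nil (l : List B) (i : ℕ) (h : i+2 ≤ l.length) : mergeAt l i ≠ [] := by
  have := mergeAt_length l i h
  intro hc; rw [hc] at this; simp at this; omega

lemma mergeAt_mergeAt (p : ℕ) : ∀ (q : ℕ) (l : List B), p ≤ q → q + 3 ≤ l.length →
    mergeAt (mergeAt l p) q = mergeAt (mergeAt l (q+1)) p := by
  induction p with
  | zero =>
    intro q l _ hl
    match l, q with
    | a::b::c::t, 0 =>
      rw [mergeAt_zero, mergeAt_zero, mergeAt_succ, mergeAt_zero, mergeAt_zero, mul_assoc]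
    | a::b::t, (q''+1) =>
      rw [mergeAt_zero, mergeAt_succ, mergeAt_succ, mergeAt_succ, mergeAt_zero]
  | succ p' ih =>
    intro q l hpq hl
    match l, q with
    | a::t, (q''+1) =>
      simp only [mergeAt_succ]
      simp only [List.length_cons] at hl
      rw [ih q'' t (by omega) (by omega)]

lemma rmulList_singleton (a b : B) : rmulList [a] b = [a*b] := by
  simp [rmulList]

lemma rmulList_cons (a b : B) (t : List B) (ht : t ≠ []) :
    rmulList (a::t) b = a :: rmulList t b := by
  obtain ⟨c, t', rfl⟩ : ∃ c t', t = c :: t' := by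
    cases t with | nil => exact absurd rfl ht | cons c t' => exact ⟨c, t', rfl⟩
  simp [rmulList]

lemma rmulList_ne_nil (l : List B) (b : B) : rmulList l b ≠ [] := by
  simp [rmulList]

lemma rmulList_length (l : List B) (b : B) (h : l ≠ []) :
    (rmulList l b).length = l.length := by
  induction l with
  | nil => exact absurd rfl h
  | cons a t ih =>
    cases t with
    | nil => simp [rmulList_singleton]
    | cons c t' =>
      rw [rmulList_cons a b _ (by simp)]
      simp only [List.length_cons]
      rw [ih (by simp)]; simp

lemma mergeAt_rmulList (i : ℕ) : ∀ (l : List B) (b : B), i + 2 ≤ l.length →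
    mergeAt (rmulList l b) i = rmulList (mergeAt l i) b := by
  induction i with
  | zero =>
    intro l b hl
    match l with
    | a::c::t =>
      cases t with
      | nil =>
        rw [rmulList_cons a b [c] (by simp), rmulList_singleton, mergeAt_zero, mergeAt_zero,
          rmulList_singleton, mul_assoc]
      | cons d t' =>
        rw [rmulList_cons a b (c::d::t') (by simp), rmulList_cons c b (d::t') (by simp),
          mergeAt_zero, mergeAt_zero, rmulList_cons (a*c) b (d::t') (by simp)]
  | succ k ih =>
    intro l b hl
    match l with
    | a::t =>
      simp only [List.length_cons] at hl
      have htne : t ≠ [] := by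
        cases t with
        | nil => simp at hl
        | cons => simp
      rw [rmulList_cons a b t htne, mergeAt_succ, mergeAt_succ,
        ih t b (by omega),
        rmulList_cons a b (mergeAt t k) (mergeAt_ne_nil t k (by omega))]

end ListLemmas

/-- The `i`-th face operation on the symbol `(x, [b₁,…,bₙ])` standing for
`x ⊗ b₁ ⊗ ⋯ ⊗ bₙ`. -/
def face {B : Type*} [Mul B] [One B] {N : Type*} [SMul B N] (i : ℕ) (p : N × List B) :
    N × List B :=
  if i = 0 then (p.2.headD 1 • p.1, p.2.tail) else (p.1, mergeAt p.2 (i-1))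

section FaceLemmas
variable {B : Type*} [CommMonoid B] {N : Type*} [MulAction B N]

lemma face_zero (p : N × List B) : face 0 p = (p.2.headD 1 • p.1, p.2.tail) := rfl

lemma face_succ (i : ℕ) (p : N × List B) : face (i+1) p = (p.1, mergeAt p.2 i) := rfl

lemma face_comm (i j : ℕ) (p : N × List B) (hij : i ≤ j) (hj : j + 2 ≤ p.2.length) :
    face j (face i p) = face i (face (j+1) p) := by
  obtain ⟨x, l⟩ := p
  match i, j with
  | 0, 0 =>
    simp only [List.length] at hj
    match l with
    | a :: b :: t =>
      simp only [face_zero, face_succ, mergeAt_zero]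
      simp [smul_smul, mul_comm]
  | 0, (k+1) =>
    match l, hj with
    | a :: t, _ =>
      simp only [face_zero, face_succ, mergeAt_succ]
      simp
  | (i'+1), (j'+1) =>
    simp only [face_succ, Nat.add_sub_cancel]
    rw [mergeAt_mergeAt i' j' l (by omega) (by simpa using hj)]

end FaceLemmas

section PrepLemmas

variable (A : Type*) [CommRing A] {B : Type*} [CommRing B] [Algebra A B]
  {N : Type*} [AddCommGroup N] [Module A N]

lemma pt_nil : pt A ([] : List B) = 1 := by simp [pt]

lemma pt_cons (c : B) (l : List B) :
    pt A (c :: l) = TensorAlgebra.ι A c * pt A l := by simp [pt]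

lemma pt_single (c : B) : pt A [c] = TensorAlgebra.ι A c := by simp [pt]

lemma pt_append (l l' : List B) : pt A (l ++ l') = pt A l * pt A l' := by
  simp [pt]

/-- Prepending with image of `ρ`: the linear map `N ⊗ B → N ⊗ T(B)` sending
`y ⊗ c` to `y ⊗ (ι c * pt l)`. -/
noncomputable def prep (l : List B) :
    (N ⊗[A] B) →ₗ[A] N ⊗[A] TensorAlgebra A B :=
  LinearMap.lTensor N ((LinearMap.mulRight A (pt A l)).comp (TensorAlgebra.ι A))

lemma prep_tmul (l : List B) (y : N) (c : B) :
    prep A l (y ⊗ₜ[A] c) = y ⊗ₜ[A] pt A (c :: l) := by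
  simp [prep, pt_cons]

/-- The homotopy `h : N ⊗ T(B) → N ⊗ T(B)` induced by a section `ρ` of `μ`:
`x ⊗ t ↦ ρ(x) • t` (multiplying the `B`-component in on the left via `ι`). -/
noncomputable def hmap (ρ : N →ₗ[A] N ⊗[A] B) :
    N ⊗[A] TensorAlgebra A B →ₗ[A] N ⊗[A] TensorAlgebra A B :=
  (LinearMap.lTensor N
      (TensorProduct.lift ((LinearMap.mul A (TensorAlgebra A B)).comp (TensorAlgebra.ι A)))) ∘ₗ
    (TensorProduct.assoc A N B (TensorAlgebra A B)).toLinearMap ∘ₗ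
      (LinearMap.rTensor (TensorAlgebra A B) ρ)

lemma hmap_tmul (ρ : N →ₗ[A] N ⊗[A] B) (x : N) (t : TensorAlgebra A B) :
    hmap A ρ (x ⊗ₜ[A] t)
      = LinearMap.lTensor N ((LinearMap.mulRight A t).comp (TensorAlgebra.ι A)) (ρ x) := by
  rw [hmap, LinearMap.comp_apply, LinearMap.comp_apply, LinearMap.rTensor_tmul]
  induction ρ x using TensorProduct.induction_on with
  | zero => rw [zero_tmul, map_zero, map_zero, map_zero]
  | tmul y c =>
    rw [LinearEquiv.coe_coe, TensorProduct.assoc_tmul, LinearMap.lTensor_tmul,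
      LinearMap.lTensor_tmul, TensorProduct.lift.tmul]
    simp
  | add w₁ w₂ ih₁ ih₂ =>
    rw [add_tmul, map_add, map_add, ih₁, ih₂, map_add]

lemma hmap_pt (ρ : N →ₗ[A] N ⊗[A] B) (x : N) (l : List B) :
    hmap A ρ (x ⊗ₜ[A] pt A l) = prep A l (ρ x) := hmap_tmul A ρ x (pt A l)

end PrepLemmas
set_option maxHeartbeats 1000000 in
/-- Let `N` be a free `B`-module.  The following are equivalent:
(i) the multiplication map `π_N : N ⊗[A] B → N` (encoded by `μ`) is a split epimorphism
of `B`-modules, i.e. admits a `B`-linear section `ρ`;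
(ii) for every `n ≥ 1`, the short exact sequence
`0 → N ⊗_B {}^nJ → N ⊗[A] B^{⊗(n−1)} ⊗[A] B → N ⊗_B {}^{n−1}J → 0` of `B`-modules
splits.  The tensored bar complex is modelled inside `N ⊗[A] T(B)` (degree-`n` part
spanned by the `x ⊗ₜ pt l`, `l.length = n`) with differentials `dN` and right
`B`-action `R`; by exactness `N ⊗_B {}^nJ` is the kernel of `dN` in degree `n`, and
splitting of the `n`-th sequence is expressed by a `B`-equivariant retraction `r` of
the degree-`n` part onto that kernel. -/
theorem stmt11 (A B N : Type*) [CommRing A] [CommRing B] [Algebra A B]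
    [AddCommGroup N] [Module A N] [Module B N] [IsScalarTower A B N]
    (ι : Type*) (bN : Module.Basis ι B N)
    (μ : N ⊗[A] B →ₗ[A] N) (hμ : ∀ (x : N) (b : B), μ (x ⊗ₜ[A] b) = b • x)
    (dN : N ⊗[A] TensorAlgebra A B →ₗ[A] N ⊗[A] TensorAlgebra A B)
    (hdN : ∀ (x : N) (l : List B), l ≠ [] →
      dN (x ⊗ₜ[A] pt A l)
        = (l.headD 1 • x) ⊗ₜ[A] pt A l.tail
          + ∑ i ∈ Finset.range (l.length - 1),
              (-1 : ℤ) ^ (i + 1) • (x ⊗ₜ[A] pt A (mergeAt l i)))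
    (R : B → N ⊗[A] TensorAlgebra A B →ₗ[A] N ⊗[A] TensorAlgebra A B)
    (hR : ∀ (b : B) (x : N) (l : List B),
      R b (x ⊗ₜ[A] pt A l)
        = if l = [] then (b • x) ⊗ₜ[A] pt A ([] : List B)
          else x ⊗ₜ[A] pt A (rmulList l b)) :
    (∃ ρ : N →ₗ[A] N ⊗[A] B,
      (∀ (b : B) (x : N),
        ρ (b • x) = LinearMap.lTensor N (LinearMap.mulRight A b) (ρ x)) ∧
      (∀ x : N, μ (ρ x) = x)) ↔
    (∀ n : ℕ, 1 ≤ n →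
      ∃ r : N ⊗[A] TensorAlgebra A B →ₗ[A] N ⊗[A] TensorAlgebra A B,
        (∀ (b : B) (v : N ⊗[A] TensorAlgebra A B), r (R b v) = R b (r v)) ∧
        (∀ v ∈ Submodule.span A
            {v : N ⊗[A] TensorAlgebra A B |
              ∃ (x : N) (l : List B), l.length = n ∧ v = x ⊗ₜ[A] pt A l},
          r v ∈ Submodule.span A
            {v : N ⊗[A] TensorAlgebra A B |
              ∃ (x : N) (l : List B), l.length = n ∧ v = x ⊗ₜ[A] pt A l}) ∧
        (∀ v ∈ Submodule.span A
            {v : N ⊗[A] TensorAlgebra A B |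
              ∃ (x : N) (l : List B), l.length = n ∧ v = x ⊗ₜ[A] pt A l},
          dN (r v) = 0) ∧
        (∀ v ∈ Submodule.span A
            {v : N ⊗[A] TensorAlgebra A B |
              ∃ (x : N) (l : List B), l.length = n ∧ v = x ⊗ₜ[A] pt A l},
          dN v = 0 → r v = v)) := by
  constructor
  · rintro ⟨ρ, hρB, hρμ⟩ n hn
    -- dN on `prep [] w`
    have L0 : ∀ w : N ⊗[A] B, dN (prep A [] w) = μ w ⊗ₜ[A] pt A ([] : List B) := by
      intro w
      induction w using TensorProduct.induction_on with
      | zero => simp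
      | tmul y c =>
        rw [prep_tmul, hdN y [c] (by simp)]
        simp [hμ]
      | add w₁ w₂ ih₁ ih₂ => simp only [map_add, ih₁, ih₂, add_tmul]
    -- dN on `prep l w` for l nonempty
    have L1 : ∀ (l : List B), l ≠ [] → ∀ w : N ⊗[A] B,
        dN (prep A l w)
          = μ w ⊗ₜ[A] pt A l
            - prep A l.tail (LinearMap.lTensor N (LinearMap.mulRight A (l.headD 1)) w)
            + ∑ k ∈ Finset.range (l.length - 1), (-1 : ℤ) ^ k • prep A (mergeAt l k) w := by
      intro l hl w
      obtain ⟨d, t, rfl⟩ : ∃ d t, l = d :: t := by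
        cases l with
        | nil => exact absurd rfl hl
        | cons d t => exact ⟨d, t, rfl⟩
      induction w using TensorProduct.induction_on with
      | zero => simp
      | tmul y c =>
        rw [prep_tmul, hdN y (c :: d :: t) (by simp)]
        have h1 : (c :: d :: t).length - 1 = t.length + 1 := by simp
        rw [h1, Finset.sum_range_succ']
        rw [hμ]
        have h2 : ∀ k ∈ Finset.range t.length,
            (-1 : ℤ) ^ (k + 1 + 1) • (y ⊗ₜ[A] pt A (mergeAt (c :: d :: t) (k + 1)))
              = (-1 : ℤ) ^ k • prep A (mergeAt (d :: t) k) (y ⊗ₜ[A] c) := by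
          intro k _
          rw [mergeAt_succ, prep_tmul]
          congr 1
          rw [pow_succ, pow_succ]; ring
        rw [Finset.sum_congr rfl h2, mergeAt_zero]
        have h3 : (d :: t).length - 1 = t.length := by simp
        rw [h3]
        simp only [List.headD_cons, List.tail_cons, prep_tmul, LinearMap.lTensor_tmul,
          LinearMap.mulRight_apply, pow_one, neg_smul, one_smul]
        abel
      | add w₁ w₂ ih₁ ih₂ =>
        simp only [map_add, ih₁, ih₂, add_tmul, smul_add, Finset.sum_add_distrib]
        abel
    -- dN in terms of faces
    have dN_pk : ∀ p : N × List B, p.2 ≠ [] →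
        dN (p.1 ⊗ₜ[A] pt A p.2)
          = ∑ i ∈ Finset.range p.2.length,
              (-1 : ℤ) ^ i • ((face i p).1 ⊗ₜ[A] pt A (face i p).2) := by
      rintro ⟨x, l⟩ hl
      obtain ⟨d, t, rfl⟩ : ∃ d t, l = d :: t := by
        cases l with
        | nil => exact absurd rfl hl
        | cons d t => exact ⟨d, t, rfl⟩
      rw [hdN x (d :: t) (by simp)]
      have h1 : (d :: t).length = t.length + 1 := by simp
      rw [h1, Finset.sum_range_succ']
      simp only [face_succ, face_zero, pow_zero, one_smul, List.headD_cons, List.tail_cons]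
      simp only [Nat.add_sub_cancel]
      exact add_comm _ _
    -- d ∘ d = 0 in degrees ≥ 2
    have D2 : ∀ (x : N) (l : List B), 2 ≤ l.length → dN (dN (x ⊗ₜ[A] pt A l)) = 0 := by
      intro x l hl
      have hlne : l ≠ [] := by intro hc; rw [hc] at hl; simp at hl
      rw [dN_pk (x, l) hlne, map_sum]
      have hstep : ∀ i ∈ Finset.range l.length,
          dN ((-1 : ℤ) ^ i • ((face i (x, l)).1 ⊗ₜ[A] pt A (face i (x, l)).2))
            = ∑ j ∈ Finset.range (l.length - 1),
                (-1 : ℤ) ^ (i + j) •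
                  ((face j (face i (x, l))).1 ⊗ₜ[A] pt A (face j (face i (x, l))).2) := by
        intro i hi
        rw [Finset.mem_range] at hi
        have hfl : (face i (x, l)).2.length = l.length - 1 := by
          cases i with
          | zero => simp [face_zero]
          | succ i' =>
            rw [face_succ]
            exact mergeAt_length l i' (by omega)
        have hfne : (face i (x, l)).2 ≠ [] := by
          intro hc
          rw [hc] at hfl; simp at hfl; omega
        rw [map_zsmul, dN_pk _ hfne, hfl, Finset.smul_sum]
        refine Finset.sum_congr rfl fun j _ => ?_
        rw [smul_smul, ← pow_add]
      rw [Finset.sum_congr rfl hstep, ← Finset.sum_product']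
      refine Finset.sum_involution
        (fun a _ => if a.1 ≤ a.2 then (a.2 + 1, a.1) else (a.2, a.1 - 1)) ?_ ?_ ?_ ?_
      · rintro ⟨i, j⟩ ha
        rw [Finset.mem_product, Finset.mem_range, Finset.mem_range] at ha
        by_cases hij : i ≤ j
        · simp only [hij, if_true]
          have hc := face_comm i j (x, l) hij (by show j + 2 ≤ l.length; omega)
          rw [← hc]
          have hs : (-1 : ℤ) ^ (j + 1 + i) = -(-1 : ℤ) ^ (i + j) := by
            rw [show j + 1 + i = (i + j) + 1 by omega, pow_succ]; ring
          rw [hs, neg_smul, add_neg_cancel]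
        · simp only [hij, if_false]
          push_neg at hij
          obtain ⟨i', rfl⟩ : ∃ i', i = i' + 1 := ⟨i - 1, by omega⟩
          simp only [Nat.add_sub_cancel]
          have hc := face_comm j i' (x, l) (by omega) (by show i' + 2 ≤ l.length; omega)
          rw [hc]
          have hs : (-1 : ℤ) ^ (j + i') = -(-1 : ℤ) ^ (i' + 1 + j) := by
            rw [show i' + 1 + j = (j + i') + 1 by omega, pow_succ]; ring
          rw [hs, neg_smul, add_neg_cancel]
      · rintro ⟨i, j⟩ ha _
        by_cases hij : i ≤ j
        · simp only [hij, if_true, ne_eq, Prod.mk.injEq, not_and]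
          omega
        · simp only [hij, if_false, ne_eq, Prod.mk.injEq, not_and]
          omega
      · rintro ⟨i, j⟩ ha
        rw [Finset.mem_product, Finset.mem_range, Finset.mem_range] at ha
        by_cases hij : i ≤ j
        · simp only [hij, if_true, Finset.mem_product, Finset.mem_range]
          omega
        · simp only [hij, if_false, Finset.mem_product, Finset.mem_range]
          omega
      · rintro ⟨i, j⟩ ha
        by_cases hij : i ≤ j
        · simp only [hij, if_true]
          rw [if_neg (by omega)]
          simp
        · simp only [hij, if_false]
          rw [if_pos (by omega)]
          have : i - 1 + 1 = i := by omega
          rw [this]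
    -- dN commutes with the right action in degrees ≥ 2
    have C : ∀ (b : B) (y : N) (l : List B), 2 ≤ l.length →
        dN (y ⊗ₜ[A] pt A (rmulList l b)) = R b (dN (y ⊗ₜ[A] pt A l)) := by
      intro b y l hl
      obtain ⟨d, c, t, rfl⟩ : ∃ d c t, l = d :: c :: t := by
        match l, hl with
        | d :: c :: t, _ => exact ⟨d, c, t, rfl⟩
      rw [hdN y (d :: c :: t) (by simp), map_add, map_sum,
        rmulList_cons d b (c :: t) (by simp),
        hdN y (d :: rmulList (c :: t) b) (by simp)]
      have hlen : (d :: rmulList (c :: t) b).length = (d :: c :: t).length := by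
        simp only [List.length_cons]
        rw [rmulList_length (c :: t) b (by simp)]
        simp
      rw [hlen]
      congr 1
      · simp only [List.headD_cons, List.tail_cons]
        rw [hR b (d • y) (c :: t), if_neg (by simp)]
      · refine Finset.sum_congr rfl fun i hi => ?_
        rw [Finset.mem_range] at hi
        simp only [List.length_cons] at hi
        rw [map_zsmul, hR b y (mergeAt (d :: c :: t) i),
          if_neg (mergeAt_ne_nil (d :: c :: t) i (by simp; omega)),
          ← rmulList_cons d b (c :: t) (by simp),
          mergeAt_rmulList i (d :: c :: t) b (by simp; omega)]
    -- prep-level commutation with the right action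
    have Cw : ∀ (l : List B), l ≠ [] → ∀ (b : B) (w : N ⊗[A] B),
        dN (prep A (rmulList l b) w) = R b (dN (prep A l w)) := by
      intro l hl b w
      induction w using TensorProduct.induction_on with
      | zero => simp
      | tmul y c =>
        rw [prep_tmul, prep_tmul, ← rmulList_cons c b l hl]
        refine C b y (c :: l) ?_
        cases l with
        | nil => exact absurd rfl hl
        | cons d t => simp
      | add w₁ w₂ ih₁ ih₂ => simp only [map_add, ih₁, ih₂]
    -- the homotopy identity on generators of positive degree
    have Hgen : ∀ (x : N) (l : List B), l ≠ [] →
        dN (hmap A ρ (x ⊗ₜ[A] pt A l)) + hmap A ρ (dN (x ⊗ₜ[A] pt A l)) = x ⊗ₜ[A] pt A l := by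
      intro x l hl
      rw [hmap_pt, L1 l hl (ρ x), hdN x l hl, map_add, map_sum, hmap_pt, hρB]
      have h2 : ∀ i ∈ Finset.range (l.length - 1),
          hmap A ρ ((-1 : ℤ) ^ (i + 1) • (x ⊗ₜ[A] pt A (mergeAt l i)))
            = -((-1 : ℤ) ^ i • prep A (mergeAt l i) (ρ x)) := by
        intro i _
        rw [map_zsmul, hmap_pt, show ((-1 : ℤ)) ^ (i + 1) = -(-1 : ℤ) ^ i from by
          rw [pow_succ]; ring, neg_smul]
      rw [Finset.sum_congr rfl h2, Finset.sum_neg_distrib, hρμ]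
      abel
    -- the generators of all degrees span everything
    have span_top : Submodule.span A
        {v : N ⊗[A] TensorAlgebra A B | ∃ (x : N) (l : List B), v = x ⊗ₜ[A] pt A l} = ⊤ := by
      rw [eq_top_iff]
      rintro v -
      induction v using TensorProduct.induction_on with
      | zero => exact zero_mem _
      | add a b ha hb => exact add_mem ha hb
      | tmul x t =>
        have ht : t ∈ Submodule.span A {u : TensorAlgebra A B | ∃ l : List B, u = pt A l} := by
          induction t using TensorAlgebra.induction with
          | algebraMap a =>
            rw [Algebra.algebraMap_eq_smul_one]
            exact Submodule.smul_mem _ a (Submodule.subset_span ⟨[], (pt_nil A).symm⟩)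
          | ι b => exact Submodule.subset_span ⟨[b], (pt_single A b).symm⟩
          | mul u₁ u₂ h₁ h₂ =>
            have hSS : Submodule.span A {u : TensorAlgebra A B | ∃ l : List B, u = pt A l} *
                Submodule.span A {u : TensorAlgebra A B | ∃ l : List B, u = pt A l}
                ≤ Submodule.span A {u : TensorAlgebra A B | ∃ l : List B, u = pt A l} := by
              rw [Submodule.span_mul_span]
              rw [Submodule.span_le]
              rintro w hw
              rw [Set.mem_mul] at hw
              obtain ⟨u, ⟨l₁, rfl⟩, u', ⟨l₂, rfl⟩, rfl⟩ := hw
              exact Submodule.subset_span ⟨l₁ ++ l₂, (pt_append A l₁ l₂).symm⟩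
            exact hSS (Submodule.mul_mem_mul h₁ h₂)
          | add u₁ u₂ h₁ h₂ => exact add_mem h₁ h₂
        clear hn
        induction ht using Submodule.span_induction with
        | mem u hu => obtain ⟨l, rfl⟩ := hu; exact Submodule.subset_span ⟨x, l, rfl⟩
        | zero => rw [tmul_zero]; exact zero_mem _
        | add u₁ u₂ hu₁ hu₂ h₁ h₂ => rw [tmul_add]; exact add_mem h₁ h₂
        | smul a u hu h => rw [tmul_smul]; exact Submodule.smul_mem _ a h
    -- membership of prep in the degree-n span
    have prep_mem : ∀ (l' : List B), l'.length + 1 = n → ∀ w : N ⊗[A] B,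
        prep A l' w ∈ Submodule.span A
          {v : N ⊗[A] TensorAlgebra A B |
            ∃ (x : N) (l : List B), l.length = n ∧ v = x ⊗ₜ[A] pt A l} := by
      intro l' hl' w
      induction w using TensorProduct.induction_on with
      | zero => rw [map_zero]; exact zero_mem _
      | tmul y c =>
        rw [prep_tmul]
        exact Submodule.subset_span ⟨y, c :: l', by simp [hl'], rfl⟩
      | add w₁ w₂ ih₁ ih₂ => rw [map_add]; exact add_mem ih₁ ih₂
    refine ⟨dN ∘ₗ hmap A ρ, ?_, ?_, ?_, ?_⟩
    · -- equivariance
      intro b v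
      have hv : v ∈ Submodule.span A
          {v : N ⊗[A] TensorAlgebra A B | ∃ (x : N) (l : List B), v = x ⊗ₜ[A] pt A l} := by
        rw [span_top]; trivial
      induction hv using Submodule.span_induction with
      | mem u hu =>
        obtain ⟨x, l, rfl⟩ := hu
        rcases eq_or_ne l [] with rfl | hl
        · rw [hR b x [], if_pos rfl, LinearMap.comp_apply, LinearMap.comp_apply,
            hmap_pt, hmap_pt, L0, L0, hρμ, hρμ, hR, if_pos rfl]
        · rw [hR b x l, if_neg hl, LinearMap.comp_apply, LinearMap.comp_apply,
            hmap_pt, hmap_pt]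
          exact Cw l hl b (ρ x)
      | zero => simp
      | add u₁ u₂ hu₁ hu₂ h₁ h₂ => simp only [map_add, h₁, h₂]
      | smul a u hu h => simp only [map_smul, h]
    · -- preservation of the degree-n span
      intro v hv
      induction hv using Submodule.span_induction with
      | mem u hu =>
        obtain ⟨x, l, hln, rfl⟩ := hu
        have hlne : l ≠ [] := by
          intro hc; rw [hc] at hln; simp at hln; omega
        rw [LinearMap.comp_apply, hmap_pt, L1 l hlne (ρ x)]
        refine add_mem (sub_mem ?_ ?_) (Submodule.sum_mem _ fun k hk => ?_)
        · exact Submodule.subset_span ⟨_, l, hln, rfl⟩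
        · refine prep_mem l.tail ?_ _
          cases l with
          | nil => exact absurd rfl hlne
          | cons d t => simp only [List.tail_cons]; simp only [List.length_cons] at hln; omega
        · rw [Finset.mem_range] at hk
          refine zsmul_mem (prep_mem (mergeAt l k) ?_ _) _
          rw [mergeAt_length l k (by omega)]
          omega
      | zero => rw [map_zero]; exact zero_mem _
      | add u₁ u₂ hu₁ hu₂ h₁ h₂ => rw [map_add]; exact add_mem h₁ h₂
      | smul a u hu h => rw [map_smul]; exact Submodule.smul_mem _ a h
    · -- lands in the kernel
      intro v hv
      induction hv using Submodule.span_induction with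
      | mem u hu =>
        obtain ⟨x, l, hln, rfl⟩ := hu
        rw [LinearMap.comp_apply, hmap_pt]
        have key : ∀ w : N ⊗[A] B, dN (dN (prep A l w)) = 0 := by
          intro w
          induction w using TensorProduct.induction_on with
          | zero => simp
          | tmul y c =>
            rw [prep_tmul]
            exact D2 y (c :: l) (by simp only [List.length_cons, hln]; omega)
          | add w₁ w₂ ih₁ ih₂ => simp only [map_add, ih₁, ih₂, add_zero]
        exact key (ρ x)
      | zero => simp
      | add u₁ u₂ hu₁ hu₂ h₁ h₂ => rw [map_add, map_add, h₁, h₂, add_zero]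
      | smul a u hu h => rw [map_smul, map_smul, h, smul_zero]
    · -- identity on the kernel
      intro v hv
      have hH : dN (hmap A ρ v) + hmap A ρ (dN v) = v := by
        induction hv using Submodule.span_induction with
        | mem u hu =>
          obtain ⟨x, l, hln, rfl⟩ := hu
          refine Hgen x l ?_
          intro hc; rw [hc] at hln; simp at hln; omega
        | zero => simp
        | add u₁ u₂ hu₁ hu₂ h₁ h₂ =>
          simp only [map_add]
          rw [show ∀ a b c d : N ⊗[A] TensorAlgebra A B, a + b + (c + d) = (a + c) + (b + d) from
            fun a b c d => by abel, h₁, h₂]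
        | smul a u hu h => simp only [map_smul, ← smul_add, h]
      intro hdv
      rw [LinearMap.comp_apply]
      rw [hdv, map_zero, add_zero] at hH
      exact hH
  · intro hsplit
    obtain ⟨r, hrR, hrS, hrK, hrFix⟩ := hsplit 1 le_rfl
    set q : N ⊗[A] TensorAlgebra A B →ₗ[A] N ⊗[A] B :=
      LinearMap.lTensor N (TensorAlgebra.ιInv : TensorAlgebra A B →ₗ[A] B) with hq_def
    set s₁ : N →ₗ[A] N ⊗[A] TensorAlgebra A B :=
      (TensorProduct.mk A N (TensorAlgebra A B)).flip (pt A [1]) with hs₁_def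
    have hs₁ : ∀ x : N, s₁ x = x ⊗ₜ[A] pt A [1] := fun x => by
      rw [hs₁_def, LinearMap.flip_apply, TensorProduct.mk_apply]
    have hq : ∀ (x : N) (c : B), q (x ⊗ₜ[A] pt A [c]) = x ⊗ₜ[A] c := by
      intro x c
      rw [pt_single, hq_def, LinearMap.lTensor_tmul,
        show (TensorAlgebra.ιInv : TensorAlgebra A B →ₗ[A] B) (TensorAlgebra.ι A c) = c from
          TensorAlgebra.ι_leftInverse c]
    have hmem1 : ∀ (x : N) (c : B), x ⊗ₜ[A] pt A [c] ∈ Submodule.span A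
        {v : N ⊗[A] TensorAlgebra A B |
          ∃ (x : N) (l : List B), l.length = 1 ∧ v = x ⊗ₜ[A] pt A l} :=
      fun x c => Submodule.subset_span ⟨x, [c], rfl, rfl⟩
    have hinj : ∀ y y' : N, y ⊗ₜ[A] pt A ([] : List B) = y' ⊗ₜ[A] pt A [] → y = y' := by
      intro y y' hy
      have h2 := congrArg (fun v => (TensorProduct.rid A N)
        ((LinearMap.lTensor N (TensorAlgebra.algebraMapInv (R := A) (M := B)).toLinearMap) v)) hy
      simpa [pt_nil, TensorProduct.rid_tmul] using h2
    have haS : ∀ v ∈ Submodule.span A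
        {v : N ⊗[A] TensorAlgebra A B |
          ∃ (x : N) (l : List B), l.length = 1 ∧ v = x ⊗ₜ[A] pt A l},
        dN v = (μ (q v)) ⊗ₜ[A] pt A ([] : List B) := by
      intro v hv
      induction hv using Submodule.span_induction with
      | mem u hu =>
        obtain ⟨x, l, hl1, rfl⟩ := hu
        obtain ⟨c, rfl⟩ : ∃ c, l = [c] := by
          match l, hl1 with
          | [c], _ => exact ⟨c, rfl⟩
        rw [hdN x [c] (by simp), hq x c, hμ]
        simp
      | zero => simp
      | add u₁ u₂ hu₁ hu₂ h₁ h₂ => rw [map_add, map_add, map_add, add_tmul, h₁, h₂]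
      | smul a u hu h => rw [map_smul, map_smul, map_smul, h, smul_tmul']
    have heS : ∀ (b : B), ∀ v ∈ Submodule.span A
        {v : N ⊗[A] TensorAlgebra A B |
          ∃ (x : N) (l : List B), l.length = 1 ∧ v = x ⊗ₜ[A] pt A l},
        q (R b v) = LinearMap.lTensor N (LinearMap.mulRight A b) (q v) := by
      intro b v hv
      induction hv using Submodule.span_induction with
      | mem u hu =>
        obtain ⟨x, l, hl1, rfl⟩ := hu
        obtain ⟨c, rfl⟩ : ∃ c, l = [c] := by
          match l, hl1 with
          | [c], _ => exact ⟨c, rfl⟩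
        rw [hR b x [c], if_neg (by simp), rmulList_singleton, hq, hq,
          LinearMap.lTensor_tmul, LinearMap.mulRight_apply]
      | zero => simp
      | add u₁ u₂ hu₁ hu₂ h₁ h₂ => rw [map_add, map_add, map_add, map_add, h₁, h₂]
      | smul a u hu h => rw [map_smul, map_smul, map_smul, map_smul, h]
    refine ⟨q ∘ₗ (LinearMap.id - r) ∘ₗ s₁, ?_, ?_⟩
    all_goals
      have hρapp : ∀ x : N, (q ∘ₗ (LinearMap.id - r) ∘ₗ s₁) x
          = q (x ⊗ₜ[A] pt A [1] - r (x ⊗ₜ[A] pt A [1])) := by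
        intro x
        rw [LinearMap.comp_apply, LinearMap.comp_apply, hs₁, LinearMap.sub_apply,
          LinearMap.id_apply]
    · -- B-equivariance
      intro b x
      have hx1 := hmem1 x 1
      have hu2 : x ⊗ₜ[A] pt A [b] = R b (x ⊗ₜ[A] pt A [1]) := by
        rw [hR, if_neg (by simp), rmulList_singleton, one_mul]
      have hker : dN ((b • x) ⊗ₜ[A] pt A [1] - x ⊗ₜ[A] pt A [b]) = 0 := by
        rw [map_sub, hdN _ [1] (by simp), hdN x [b] (by simp)]
        simp
      have hmm : (b • x) ⊗ₜ[A] pt A [1] - x ⊗ₜ[A] pt A [b] ∈ Submodule.span A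
          {v : N ⊗[A] TensorAlgebra A B |
            ∃ (x : N) (l : List B), l.length = 1 ∧ v = x ⊗ₜ[A] pt A l} :=
        sub_mem (hmem1 _ 1) (hmem1 x b)
      have hfix := hrFix _ hmm hker
      rw [map_sub] at hfix
      have hsw : (b • x) ⊗ₜ[A] pt A [1] - r ((b • x) ⊗ₜ[A] pt A [1])
          = x ⊗ₜ[A] pt A [b] - r (x ⊗ₜ[A] pt A [b]) := by
        rw [sub_eq_sub_iff_sub_eq_sub]
        exact hfix.symm
      have hw : x ⊗ₜ[A] pt A [1] - r (x ⊗ₜ[A] pt A [1]) ∈ Submodule.span A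
          {v : N ⊗[A] TensorAlgebra A B |
            ∃ (x : N) (l : List B), l.length = 1 ∧ v = x ⊗ₜ[A] pt A l} :=
        sub_mem hx1 (hrS _ hx1)
      calc (q ∘ₗ (LinearMap.id - r) ∘ₗ s₁) (b • x)
          = q ((b • x) ⊗ₜ[A] pt A [1] - r ((b • x) ⊗ₜ[A] pt A [1])) := hρapp (b • x)
        _ = q (R b (x ⊗ₜ[A] pt A [1] - r (x ⊗ₜ[A] pt A [1]))) := by
            rw [hsw, hu2, hrR b, ← map_sub]
        _ = LinearMap.lTensor N (LinearMap.mulRight A b)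
              (q (x ⊗ₜ[A] pt A [1] - r (x ⊗ₜ[A] pt A [1]))) := heS b _ hw
        _ = LinearMap.lTensor N (LinearMap.mulRight A b)
              ((q ∘ₗ (LinearMap.id - r) ∘ₗ s₁) x) := by rw [hρapp x]
    · -- section of μ
      intro x
      have hx1 := hmem1 x 1
      have hw : x ⊗ₜ[A] pt A [1] - r (x ⊗ₜ[A] pt A [1]) ∈ Submodule.span A
          {v : N ⊗[A] TensorAlgebra A B |
            ∃ (x : N) (l : List B), l.length = 1 ∧ v = x ⊗ₜ[A] pt A l} :=
        sub_mem hx1 (hrS _ hx1)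
      have hdw : dN (x ⊗ₜ[A] pt A [1] - r (x ⊗ₜ[A] pt A [1])) = x ⊗ₜ[A] pt A [] := by
        rw [map_sub, hrK _ hx1, sub_zero, hdN x [1] (by simp)]
        simp
      have hcmp := haS _ hw
      rw [hdw] at hcmp
      have hres := hinj _ _ hcmp
      rw [hρapp x]
      exact hres.symm
end

section
/- Let A be a commutative ring, B a commutative A-algebra, and J the diagonal ideal. The map B ⊗_A (B/A) → J induced by b₁ ⊗ b̄₂ ↦ b₁·(1 ⊗ b₂ − b₂ ⊗ 1) is a well-defined surjective left B-module homomorphism; it is an isomorphism when B is free as an A-module on a basis containing 1. -/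
open TensorProduct

set_option maxHeartbeats 800000 in
/-- The map `B ⊗[A] (B/A) → J` induced by
`b₁ ⊗ b̄₂ ↦ b₁·(1 ⊗ b₂ − b₂ ⊗ 1)` is a well-defined surjective left `B`-module
homomorphism (well-definedness = existence of the `A`-linear map `κ` with the stated
values on pure tensors), and it is an isomorphism whenever `B` is free as an
`A`-module on a basis containing `1`. -/
theorem stmt14 (A B : Type*) [CommRing A] [CommRing B] [Algebra A B] (ι : Type*) :
    let J : Ideal (B ⊗[A] B) :=
      RingHom.ker (Algebra.TensorProduct.lmul' A (S := B)).toRingHom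
    let Bbar := B ⧸ (Submodule.span A {(1 : B)})
    ∃ κ : B ⊗[A] Bbar →ₗ[A] J,
      (∀ b₁ b₂ : B,
        (κ (b₁ ⊗ₜ[A] (Submodule.Quotient.mk b₂)) : B ⊗[A] B)
          = (b₁ ⊗ₜ[A] (1 : B)) * ((1 : B) ⊗ₜ[A] b₂ - b₂ ⊗ₜ[A] (1 : B))) ∧
      Function.Surjective κ ∧
      (∀ (b b₁ : B) (c : Bbar),
        (κ ((b * b₁) ⊗ₜ[A] c) : B ⊗[A] B)
          = (b ⊗ₜ[A] (1 : B)) * (κ (b₁ ⊗ₜ[A] c) : B ⊗[A] B)) ∧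
      (∀ (v : Module.Basis ι A B) (i₀ : ι), v i₀ = 1 → Function.Bijective κ) := by
  intro J Bbar
  classical
  set mul := (Algebra.TensorProduct.lmul' A (S := B)) with hmuldef
  set S : Submodule A B := Submodule.span A {(1 : B)} with hS
  set iL : B →ₗ[A] B ⊗[A] B :=
    (Algebra.TensorProduct.includeLeft : B →ₐ[A] B ⊗[A] B).toLinearMap with hiL
  set F : B ⊗[A] B →ₗ[A] B ⊗[A] B := LinearMap.id - iL.comp mul.toLinearMap with hF
  have hFtmul : ∀ b₁ b₂ : B, F (b₁ ⊗ₜ[A] b₂) = b₁ ⊗ₜ[A] b₂ - (b₁ * b₂) ⊗ₜ[A] 1 := by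
    intro b₁ b₂
    simp [hF, hiL, hmuldef, Algebra.TensorProduct.includeLeft_apply,
      Algebra.TensorProduct.lmul'_apply_tmul]
  have hFmem : ∀ x : B ⊗[A] B, F x ∈ J.restrictScalars A := by
    intro x
    simp only [Submodule.restrictScalars_mem]
    show F x ∈ RingHom.ker mul.toRingHom
    rw [RingHom.mem_ker]
    show mul (F x) = 0
    simp [hF, hiL, hmuldef, Algebra.TensorProduct.includeLeft_apply,
      Algebra.TensorProduct.lmul'_apply_tmul]
  set F' : B ⊗[A] B →ₗ[A] (J.restrictScalars A) :=
    F.codRestrict (J.restrictScalars A) hFmem with hF'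
  have hker : ∀ b₁ : B, S ≤ LinearMap.ker (F'.comp ((TensorProduct.mk A B B) b₁)) := by
    intro b₁
    rw [hS, Submodule.span_le]
    rintro x rfl
    simp only [SetLike.mem_coe, LinearMap.mem_ker, LinearMap.comp_apply]
    apply Subtype.ext
    simp [hF', LinearMap.codRestrict_apply, hFtmul]
  set g : B →ₗ[A] (Bbar →ₗ[A] (J.restrictScalars A)) :=
    { toFun := fun b₁ => Submodule.liftQ S (F'.comp ((TensorProduct.mk A B B) b₁)) (hker b₁)
      map_add' := by
        intro b b'
        refine LinearMap.ext fun c => ?_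
        obtain ⟨b₂, rfl⟩ := Submodule.Quotient.mk_surjective S c
        apply Subtype.ext
        simp [Submodule.liftQ_apply, hF', LinearMap.codRestrict_apply, add_tmul]
      map_smul' := by
        intro a b
        refine LinearMap.ext fun c => ?_
        obtain ⟨b₂, rfl⟩ := Submodule.Quotient.mk_surjective S c
        apply Subtype.ext
        show F ((a • b) ⊗ₜ[A] b₂) = a • F (b ⊗ₜ[A] b₂)
        rw [← map_smul, smul_tmul'] } with hg
  set κ₀ : B ⊗[A] Bbar →ₗ[A] (J.restrictScalars A) := TensorProduct.lift g with hκ₀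
  set e : (J.restrictScalars A) ≃ₗ[A] J :=
    (Submodule.restrictScalarsEquiv A (B ⊗[A] B) (B ⊗[A] B) J).restrictScalars A with he
  have hecoe : ∀ z : (J.restrictScalars A), ((e z : J) : B ⊗[A] B) = (z : B ⊗[A] B) :=
    fun z => rfl
  set κ : B ⊗[A] Bbar →ₗ[A] J := e.toLinearMap.comp κ₀ with hκ
  have hκval : ∀ (b₁ b₂ : B),
      (κ (b₁ ⊗ₜ[A] (Submodule.Quotient.mk b₂)) : B ⊗[A] B)
        = b₁ ⊗ₜ[A] b₂ - (b₁ * b₂) ⊗ₜ[A] 1 := by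
    intro b₁ b₂
    show ((e (κ₀ (b₁ ⊗ₜ[A] (Submodule.Quotient.mk b₂))) : J) : B ⊗[A] B) = _
    rw [hecoe]
    show F (b₁ ⊗ₜ[A] b₂) = _
    exact hFtmul b₁ b₂
  have hμ0 : ∀ x : ↥J, mul.toLinearMap (x : B ⊗[A] B) = 0 := by
    intro x
    exact x.2
  have key : ∀ y : B ⊗[A] B, (κ ((LinearMap.lTensor B S.mkQ) y) : B ⊗[A] B) = F y := by
    intro y
    induction y with
    | zero => simp
    | tmul b₁ b₂ =>
        rw [LinearMap.lTensor_tmul]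
        show (κ (b₁ ⊗ₜ[A] (Submodule.Quotient.mk b₂)) : B ⊗[A] B) = _
        rw [hκval, hFtmul]
    | add y₁ y₂ h₁ h₂ => simp only [map_add, Submodule.coe_add, h₁, h₂]
  have hsurj : Function.Surjective κ := by
    intro x
    refine ⟨(LinearMap.lTensor B S.mkQ) (x : B ⊗[A] B), ?_⟩
    apply Subtype.ext
    rw [key]
    show F (x : B ⊗[A] B) = (x : B ⊗[A] B)
    simp only [hF, LinearMap.sub_apply, LinearMap.id_apply, LinearMap.comp_apply]
    rw [hμ0 x, map_zero, sub_zero]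
  have hinj : Function.Injective κ := by
    have hretr : Function.LeftInverse
        (fun z : ↥J => (LinearMap.lTensor B S.mkQ) (z : B ⊗[A] B)) κ := by
      intro y
      induction y with
      | zero => simp
      | tmul b₁ c =>
          obtain ⟨b₂, rfl⟩ := Submodule.Quotient.mk_surjective S c
          show (LinearMap.lTensor B S.mkQ)
            ((κ (b₁ ⊗ₜ[A] (Submodule.Quotient.mk b₂)) : B ⊗[A] B)) = _
          rw [hκval]
          have h1 : S.mkQ (1 : B) = 0 := by
            rw [Submodule.mkQ_apply, Submodule.Quotient.mk_eq_zero]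
            exact Submodule.mem_span_singleton_self 1
          simp [h1]
      | add y₁ y₂ h₁ h₂ =>
          show (LinearMap.lTensor B S.mkQ) ((κ (y₁ + y₂) : B ⊗[A] B)) = _
          rw [map_add, Submodule.coe_add, map_add]
          exact congrArg₂ (· + ·) h₁ h₂
    exact hretr.injective
  refine ⟨κ, ?_, hsurj, ?_, fun _ _ _ => ⟨hinj, hsurj⟩⟩
  · intro b₁ b₂
    rw [hκval, mul_sub, Algebra.TensorProduct.tmul_mul_tmul,
      Algebra.TensorProduct.tmul_mul_tmul, mul_one, one_mul, mul_one]
  · intro b b₁ c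
    obtain ⟨b₂, rfl⟩ := Submodule.Quotient.mk_surjective S c
    rw [hκval, hκval, mul_sub, Algebra.TensorProduct.tmul_mul_tmul,
      Algebra.TensorProduct.tmul_mul_tmul, mul_one, one_mul, mul_assoc]
end
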